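/- arXiv:1411.4041 — 4 statements merged into one kernel-verified Lean document; each statement's English description precedes it below -/
import Mathlib

section
/- Let O ⊆ ℤ² and let x₁ < x₃ < x₂ and y₁ < y₂ < y₃ be integers. Suppose there is a finite oriented path in O from (x₁,y₁) to (x₂,y₂) and a finite oriented path in O from (x₃,y₁) to (x₂,y₃). Then these two paths share a common site; consequently there exist a finite oriented path in O from (x₁,y₁) to (x₂,y₃) and a finite oriented path in O from (x₃,y₁) to (x₂,y₂). -/
/-- A finite oriented path in `O ⊆ ℤ²` of length `ℓ` from `u` to `w`: a sequence of
sites of `O` starting at `u`, ending at `w`, each successive site obtained from the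
previous one by adding `(1,0)` or `(0,1)`. -/
def IsOrientedPathIn (O : Set (ℤ × ℤ)) (ℓ : ℕ) (p : ℕ → ℤ × ℤ) (u w : ℤ × ℤ) : Prop :=
  p 0 = u ∧ p ℓ = w ∧
    (∀ t, t < ℓ → p (t + 1) = p t + (1, 0) ∨ p (t + 1) = p t + (0, 1)) ∧
    (∀ t, t ≤ ℓ → p t ∈ O)

lemma path_sum {O ℓ p u w} (hp : IsOrientedPathIn O ℓ p u w) :
    ∀ t ≤ ℓ, (p t).1 + (p t).2 = (p 0).1 + (p 0).2 + t := by
  intro t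
  induction t with
  | zero => intro _; simp
  | succ n ih =>
    intro hle
    have h := hp.2.2.1 n (by omega)
    have := ih (by omega)
    rcases h with h | h <;> rw [h] <;> simp [Prod.fst_add, Prod.snd_add] <;> omega

lemma path_x_step {O ℓ p u w} (hp : IsOrientedPathIn O ℓ p u w) :
    ∀ t < ℓ, (p (t+1)).1 = (p t).1 ∨ (p (t+1)).1 = (p t).1 + 1 := by
  intro t ht
  rcases hp.2.2.1 t ht with h | h <;> rw [h] <;> simp

lemma path_x_mono {O ℓ p u w} (hp : IsOrientedPathIn O ℓ p u w) :
    ∀ s k, s + k ≤ ℓ → (p s).1 ≤ (p (s + k)).1 := by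
  intro s k
  induction k with
  | zero => intro _; simp
  | succ n ih =>
    intro h
    have h1 := ih (by omega)
    have : s + (n + 1) = (s + n) + 1 := by omega
    rw [this]
    rcases path_x_step hp (s + n) (by omega) with h2 | h2 <;> omega

lemma path_x_le {O ℓ p u w} (hp : IsOrientedPathIn O ℓ p u w) :
    ∀ t ≤ ℓ, (p t).1 ≤ (p 0).1 + t := by
  intro t
  induction t with
  | zero => simp
  | succ n ih =>
    intro h
    have := ih (by omega)
    rcases path_x_step hp n (by omega) with h2 | h2 <;> push_cast <;> omega

lemma ivt (f : ℕ → ℤ) (n : ℕ) (h0 : f 0 ≤ 0) (hn : 0 ≤ f n)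
    (hstep : ∀ k, k < n → f (k+1) ≤ f k + 1) : ∃ k ≤ n, f k = 0 := by
  classical
  have hex : ∃ k, 0 ≤ f k := ⟨n, hn⟩
  set k := Nat.find hex with hk
  have hkn : k ≤ n := Nat.find_min' hex hn
  have hfk : 0 ≤ f k := Nat.find_spec hex
  rcases Nat.eq_zero_or_pos k with h | h
  · exact ⟨0, by omega, by have := h ▸ hfk; omega⟩
  · have hprev : ¬ (0 ≤ f (k - 1)) := Nat.find_min hex (by omega)
    have : f k ≤ f (k - 1) + 1 := by
      have := hstep (k - 1) (by omega)
      have hk1 : k - 1 + 1 = k := by omega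
      rwa [hk1] at this
    exact ⟨k, hkn, by omega⟩

lemma path_concat {O ℓp ℓq p q a b c d} (hp : IsOrientedPathIn O ℓp p a b)
    (hq : IsOrientedPathIn O ℓq q c d) (t u : ℕ) (ht : t ≤ ℓp) (hu : u ≤ ℓq)
    (hpq : p t = q u) : ∃ ℓ r, IsOrientedPathIn O ℓ r a d := by
  refine ⟨t + (ℓq - u), fun k => if k ≤ t then p k else q (u + (k - t)), ?_, ?_, ?_, ?_⟩
  · simp [hp.1]
  · dsimp only
    by_cases h : ℓq = u
    · subst h
      simp only [Nat.sub_self, Nat.add_zero, if_pos (le_refl t)]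
      rw [hpq, hq.2.1]
    · rw [if_neg (by omega)]
      have : u + (t + (ℓq - u) - t) = ℓq := by omega
      rw [this, hq.2.1]
  · intro k hk
    dsimp only
    by_cases h1 : k + 1 ≤ t
    · rw [if_pos h1, if_pos (by omega)]
      exact hp.2.2.1 k (by omega)
    · rw [if_neg h1]
      have hrk : (if k ≤ t then p k else q (u + (k - t))) = q (u + (k - t)) := by
        by_cases h2 : k ≤ t
        · have : k = t := by omega
          rw [if_pos h2, this, hpq]
          congr 1; omega
        · rw [if_neg h2]
      rw [hrk]
      have : u + (k + 1 - t) = (u + (k - t)) + 1 := by omega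
      rw [this]
      exact hq.2.2.1 _ (by omega)
  · intro k hk
    dsimp only
    by_cases h2 : k ≤ t
    · rw [if_pos h2]; exact hp.2.2.2 k (by omega)
    · rw [if_neg h2]; exact hq.2.2.2 _ (by omega)

/-- **Planarity crossing property.** If `x₁ < x₃ < x₂` and `y₁ < y₂ < y₃`, an oriented
path in `O` from `(x₁,y₁)` to `(x₂,y₂)` and an oriented path in `O` from `(x₃,y₁)` to
`(x₂,y₃)` must intersect; consequently there are oriented paths in `O` from `(x₁,y₁)`
to `(x₂,y₃)` and from `(x₃,y₁)` to `(x₂,y₂)`. -/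
theorem oriented_paths_cross (O : Set (ℤ × ℤ)) (x₁ x₂ x₃ y₁ y₂ y₃ : ℤ)
    (h13 : x₁ < x₃) (h32 : x₃ < x₂) (h12 : y₁ < y₂) (h23 : y₂ < y₃)
    (ℓp : ℕ) (p : ℕ → ℤ × ℤ) (hp : IsOrientedPathIn O ℓp p (x₁, y₁) (x₂, y₂))
    (ℓq : ℕ) (q : ℕ → ℤ × ℤ) (hq : IsOrientedPathIn O ℓq q (x₃, y₁) (x₂, y₃)) :
    (∃ t ≤ ℓp, ∃ u ≤ ℓq, p t = q u) ∧
    (∃ (ℓ : ℕ) (r : ℕ → ℤ × ℤ), IsOrientedPathIn O ℓ r (x₁, y₁) (x₂, y₃)) ∧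
    (∃ (ℓ : ℕ) (r : ℕ → ℤ × ℤ), IsOrientedPathIn O ℓ r (x₃, y₁) (x₂, y₂)) := by
  have hp0 : p 0 = (x₁, y₁) := hp.1
  have hpl : p ℓp = (x₂, y₂) := hp.2.1
  have hq0 : q 0 = (x₃, y₁) := hq.1
  have hql : q ℓq = (x₂, y₃) := hq.2.1
  have hlp : x₂ + y₂ = x₁ + y₁ + ℓp := by
    have := path_sum hp ℓp le_rfl
    rw [hp0, hpl] at this; simpa using this
  have hlq : x₂ + y₃ = x₃ + y₁ + ℓq := by
    have := path_sum hq ℓq le_rfl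
    rw [hq0, hql] at this; simpa using this
  set δ : ℕ := (x₃ - x₁).toNat with hδdef
  have hδ : (δ : ℤ) = x₃ - x₁ := Int.toNat_of_nonneg (by omega)
  have hδℓp : δ ≤ ℓp := by omega
  set n : ℕ := ℓp - δ with hndef
  have hnℓq : n ≤ ℓq := by omega
  set f : ℕ → ℤ := fun k => (p (δ + k)).1 - (q k).1 with hfdef
  have hf0 : f 0 ≤ 0 := by
    have h1 := path_x_le hp δ hδℓp
    rw [hp0] at h1
    simp only [hfdef, Nat.add_zero, hq0]
    omega
  have hfn : 0 ≤ f n := by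
    have h1 := path_x_mono hq n (ℓq - n) (by omega)
    have h2 : n + (ℓq - n) = ℓq := by omega
    rw [h2, hql] at h1
    have h3 : δ + n = ℓp := by omega
    simp only [hfdef, h3, hpl]
    omega
  have hstep : ∀ k, k < n → f (k+1) ≤ f k + 1 := by
    intro k hk
    have h1 : δ + (k + 1) = (δ + k) + 1 := by omega
    rcases path_x_step hp (δ + k) (by omega) with h2 | h2 <;>
      rcases path_x_step hq k (by omega) with h3 | h3 <;>
        simp only [hfdef, h1, h2, h3] <;> omega
  obtain ⟨k, hkn, hfk⟩ := ivt f n hf0 hfn hstep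
  have hx : (p (δ + k)).1 = (q k).1 := by
    simp only [hfdef] at hfk; omega
  have hmeet : p (δ + k) = q k := by
    have h1 := path_sum hp (δ + k) (by omega)
    have h2 := path_sum hq k (by omega)
    rw [hp0] at h1
    rw [hq0] at h2
    have hy : (p (δ + k)).2 = (q k).2 := by push_cast at h1 h2 ⊢; omega
    exact Prod.ext hx hy
  refine ⟨⟨δ + k, by omega, k, by omega, hmeet⟩, ?_, ?_⟩
  · exact path_concat hp hq (δ + k) k (by omega) (by omega) hmeet
  · exact path_concat hq hp k (δ + k) (by omega) (by omega) hmeet.symm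
end

section
/- Let m = 60000. There exists L* such that for every integer L₀ ≥ L*, with L₁ = L₀^{10}, there exists M* (depending on L₀) such that for every multiple M of 4 with M ≥ M* the following holds. Let x₁,…,x_n ∈ {1,…,M} be any fixed sequence with n ≤ (100m+1)·L₁. Let (Y_t)_{t≥1} be i.i.d. uniform on {1,…,M} and σ = min{t ≥ L₁ : Y_t ≡ 3 (mod 4) and Y_{t+1} ≡ 2 (mod 4)}. Then the probability that there exists an open oriented path from (1,1) to (n,σ) — where a site (i,j) with 1 ≤ i ≤ n, 1 ≤ j ≤ σ is open if x_i ≠ Y_j — is at least 3/4 + 2^{−4}. -/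
open MeasureTheory ProbabilityTheory
open scoped ENNReal

/-!
Take `Mstar = 32 (L₁ + 128) N` with `N = (100m+1) L₁`. The 64 disjoint pairs
`(Y_{L₁+2i}, Y_{L₁+2i+1})`, `i < 64`, are independent and each shows the pattern `(3, 2) mod 4`
with probability `1/16`, so `σ ≤ L₁ + 126` except with probability `(15/16)^64`. By a union bound,
some `Y_j` with `j ≤ L₁ + 128` equals a letter of `x` with probability at most
`(L₁ + 128) N / M ≤ 1/32`. Off these two events the whole bottom row and the last column up to
`σ` are open, so the hook along the row and up the column is an open path to `(n, σ)`; and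
`(15/16)^64 + 1/32 ≤ 3/16`.
-/

open Finset

theorem natCast_mul_inv_le_inv {a c M : ℕ} (h : c * a ≤ M) :
    (a : ℝ≥0∞) * (M : ℝ≥0∞)⁻¹ ≤ (c : ℝ≥0∞)⁻¹ := by
  rw [ENNReal.le_inv_iff_mul_le]
  calc (a : ℝ≥0∞) * (M : ℝ≥0∞)⁻¹ * c = ((c * a : ℕ) : ℝ≥0∞) * (M : ℝ≥0∞)⁻¹ := by
        push_cast; ring
    _ ≤ M * (M : ℝ≥0∞)⁻¹ := by gcongr
    _ ≤ 1 := ENNReal.mul_inv_le_one _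

theorem one_sub_inv_four_sq_le : (1 : ℝ≥0∞) - (4 ^ 2)⁻¹ ≤ 15 / 16 := by
  rw [tsub_le_iff_right, ← ENNReal.toReal_le_toReal (by simp) (by simp [ENNReal.div_eq_top])]
  norm_num [ENNReal.toReal_add, ENNReal.toReal_div, ENNReal.div_eq_top]

theorem three_div_four_add_inv_two_pow_four_add_le_one :
    (3 : ℝ≥0∞) / 4 + ((2 : ℝ≥0∞) ^ (4 : ℕ))⁻¹ + ((15 / 16) ^ 64 + 32⁻¹) ≤ 1 := by
  rw [← ENNReal.toReal_le_toReal (by simp [ENNReal.div_eq_top]) (by simp)]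
  norm_num [ENNReal.toReal_add, ENNReal.toReal_div, ENNReal.toReal_inv, ENNReal.toReal_pow,
    ENNReal.div_eq_top, ENNReal.pow_eq_top_iff]

section Probability

variable {Ω : Type*} [MeasurableSpace Ω] {μ : Measure Ω}

structure IsUniformOnIcc (f : Ω → ℕ) (M : ℕ) (μ : Measure Ω) : Prop where
  measurable : Measurable f
  apply_mem_Icc : ∀ ω, f ω ∈ Icc 1 M
  measure_eq : ∀ k ∈ Icc 1 M, μ {ω | f ω = k} = (M : ℝ≥0∞)⁻¹

namespace IsUniformOnIcc

variable {f g : Ω → ℕ} {M : ℕ}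

theorem measure_setOf_eq_card_mul_inv (hf : IsUniformOnIcc f M μ) (p : ℕ → Prop)
    [DecidablePred p] : μ {ω | p (f ω)} = #{k ∈ Icc 1 M | p k} * (M : ℝ≥0∞)⁻¹ := by
  have hpre : {ω | p (f ω)} = f ⁻¹' ↑{k ∈ Icc 1 M | p k} := by
    ext ω
    simp [mem_Icc.1 (hf.apply_mem_Icc ω)]
  calc μ {ω | p (f ω)} = ∑ k ∈ Icc 1 M with p k, μ (f ⁻¹' {k}) := by
        rw [hpre, sum_measure_preimage_singleton]
        exact fun k _ => hf.measurable (measurableSet_singleton k)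
    _ = ∑ _k ∈ Icc 1 M with p _k, (M : ℝ≥0∞)⁻¹ :=
        sum_congr rfl fun k hk => hf.measure_eq k (mem_filter.1 hk).1
    _ = #{k ∈ Icc 1 M | p k} * (M : ℝ≥0∞)⁻¹ := by rw [sum_const, nsmul_eq_mul]

theorem measure_mem_le (hf : IsUniformOnIcc f M μ) (S : Finset ℕ) :
    μ {ω | f ω ∈ S} ≤ #S * (M : ℝ≥0∞)⁻¹ := by
  rw [hf.measure_setOf_eq_card_mul_inv (· ∈ S)]
  gcongr
  intro k hk
  exact (mem_filter.1 hk).2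

theorem inv_le_measure_mod_eq (hf : IsUniformOnIcc f M μ) {d c : ℕ} (hdM : d ∣ M) (hM : 0 < M)
    (hc : 0 < c) (hcd : c < d) : (d : ℝ≥0∞)⁻¹ ≤ μ {ω | f ω % d = c} := by
  obtain ⟨q, rfl⟩ := hdM
  have hq : 0 < q := Nat.pos_of_mul_pos_left hM
  have hcard : q ≤ #{k ∈ Icc 1 (d * q) | k % d = c} := by
    have hinj : Set.InjOn (fun j => d * j + c) (range q) := fun i _ j _ hij => by
      simp only at hij
      exact Nat.eq_of_mul_eq_mul_left (n := d) (by omega) (by omega)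
    simpa using card_le_card_of_injOn (fun j => d * j + c) (fun j hj => by
      have : d * j + d ≤ d * q := by nlinarith [mem_range.1 hj]
      exact mem_filter.2 ⟨mem_Icc.2 ⟨(by omega : 1 ≤ d * j + c), (by omega : d * j + c ≤ d * q)⟩,
        by simp [Nat.mod_eq_of_lt hcd]⟩) hinj
  calc (d : ℝ≥0∞)⁻¹ = q * ((d * q : ℕ) : ℝ≥0∞)⁻¹ := by
        rw [Nat.cast_mul, ENNReal.mul_inv (by simp) (by simp), mul_left_comm,
          ENNReal.mul_inv_cancel (Nat.cast_ne_zero.2 (by omega)) (by simp), mul_one]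
    _ ≤ #{k ∈ Icc 1 (d * q) | k % d = c} * ((d * q : ℕ) : ℝ≥0∞)⁻¹ := by gcongr
    _ = μ {ω | f ω % d = c} := (hf.measure_setOf_eq_card_mul_inv _).symm

theorem inv_sq_le_measure_mod_eq_and_mod_eq (hf : IsUniformOnIcc f M μ)
    (hg : IsUniformOnIcc g M μ) (hfg : IndepFun f g μ) {d c c' : ℕ} (hdM : d ∣ M) (hM : 0 < M)
    (hc : 0 < c) (hcd : c < d) (hc' : 0 < c') (hc'd : c' < d) :
    ((d : ℝ≥0∞) ^ 2)⁻¹ ≤ μ {ω | f ω % d = c ∧ g ω % d = c'} := by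
  have hmeas : ∀ s : Set ℕ, MeasurableSet s := fun s => s.to_countable.measurableSet
  calc ((d : ℝ≥0∞) ^ 2)⁻¹ = (d : ℝ≥0∞)⁻¹ * (d : ℝ≥0∞)⁻¹ := by
        rw [sq, ENNReal.mul_inv (by simp) (by simp)]
    _ ≤ μ {ω | f ω % d = c} * μ {ω | g ω % d = c'} :=
        mul_le_mul' (hf.inv_le_measure_mod_eq hdM hM hc hcd)
          (hg.inv_le_measure_mod_eq hdM hM hc' hc'd)
    _ = μ {ω | f ω % d = c ∧ g ω % d = c'} :=
        (hfg.measure_inter_preimage_eq_mul _ _ (hmeas {k | k % d = c})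
          (hmeas {k | k % d = c'})).symm

theorem measure_not_mod_eq_and_mod_eq_le [IsProbabilityMeasure μ] (hf : IsUniformOnIcc f M μ)
    (hg : IsUniformOnIcc g M μ) (hfg : IndepFun f g μ) {d c c' : ℕ} (hdM : d ∣ M) (hM : 0 < M)
    (hc : 0 < c) (hcd : c < d) (hc' : 0 < c') (hc'd : c' < d) :
    μ {ω | ¬(f ω % d = c ∧ g ω % d = c')} ≤ 1 - ((d : ℝ≥0∞) ^ 2)⁻¹ := by
  have hmeas : MeasurableSet {ω | f ω % d = c ∧ g ω % d = c'} :=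
    (hf.measurable (Set.to_countable {k | k % d = c}).measurableSet).inter
      (hg.measurable (Set.to_countable {k | k % d = c'}).measurableSet)
  calc μ {ω | ¬(f ω % d = c ∧ g ω % d = c')} = 1 - μ {ω | f ω % d = c ∧ g ω % d = c'} :=
        prob_compl_eq_one_sub hmeas
    _ ≤ 1 - ((d : ℝ≥0∞) ^ 2)⁻¹ :=
        tsub_le_tsub_left (hf.inv_sq_le_measure_mod_eq_and_mod_eq hg hfg hdM hM hc hcd hc' hc'd) 1

end IsUniformOnIcc

theorem measure_exists_mem_le {Y : ℕ → Ω → ℕ} {M : ℕ} (hY : ∀ j, IsUniformOnIcc (Y j) M μ)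
    (J S : Finset ℕ) : μ {ω | ∃ j ∈ J, Y j ω ∈ S} ≤ #J * #S * (M : ℝ≥0∞)⁻¹ := by
  have hunion : {ω | ∃ j ∈ J, Y j ω ∈ S} = ⋃ j ∈ J, {ω | Y j ω ∈ S} := by
    ext ω
    simp
  calc μ {ω | ∃ j ∈ J, Y j ω ∈ S} ≤ ∑ j ∈ J, μ {ω | Y j ω ∈ S} :=
        hunion ▸ measure_biUnion_finset_le J _
    _ ≤ ∑ _j ∈ J, #S * (M : ℝ≥0∞)⁻¹ := sum_le_sum fun j _ => (hY j).measure_mem_le S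
    _ = #J * #S * (M : ℝ≥0∞)⁻¹ := by rw [sum_const, nsmul_eq_mul, mul_assoc]

theorem le_measure_of_compl_subset [IsProbabilityMeasure μ] {s t : Set Ω} {a b : ℝ≥0∞}
    (hst : sᶜ ⊆ t) (ht : μ t ≤ b) (hab : a + b ≤ 1) : a ≤ μ s := by
  have hb : b ≠ ∞ := ne_top_of_le_ne_top ENNReal.one_ne_top (le_add_self.trans hab)
  refine ENNReal.le_of_add_le_add_right hb ?_
  calc a + b ≤ 1 := hab
    _ = μ (s ∪ sᶜ) := by rw [Set.union_compl_self, measure_univ]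
    _ ≤ μ s + μ sᶜ := measure_union_le _ _
    _ ≤ μ s + b := by gcongr; exact (measure_mono hst).trans ht

theorem measure_forall_lt_not_pair_le_pow {β : Type*} [MeasurableSpace β] [Countable β]
    [MeasurableSingletonClass β] {Y : ℕ → Ω → β} (hY : ∀ j, Measurable (Y j))
    (hind : iIndepFun Y μ) (P : β → β → Prop) (a : ℕ) {q : ℝ≥0∞}
    (hq : ∀ i, μ {ω | ¬P (Y (a + 2 * i) ω) (Y (a + 2 * i + 1) ω)} ≤ q) (r : ℕ) :
    μ {ω | ∀ i < r, ¬P (Y (a + 2 * i) ω) (Y (a + 2 * i + 1) ω)} ≤ q ^ r := by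
  induction r with
  | zero =>
    have := hind.isProbabilityMeasure
    simp
  | succ r ih =>
    set S : Finset ℕ := {a + 2 * r, a + 2 * r + 1}
    set T : Finset ℕ := range (a + 2 * r)
    have hST : Disjoint S T := by simp [S, T]
    have hsplit : {ω | ∀ i < r + 1, ¬P (Y (a + 2 * i) ω) (Y (a + 2 * i + 1) ω)} =
        (fun ω (j : S) => Y j ω) ⁻¹'
          {g | ¬P (g ⟨a + 2 * r, by simp [S]⟩) (g ⟨a + 2 * r + 1, by simp [S]⟩)} ∩
        (fun ω (j : T) => Y j ω) ⁻¹'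
          {g | ∀ i (hi : i < r), ¬P (g ⟨a + 2 * i, by simp [T]; omega⟩)
            (g ⟨a + 2 * i + 1, by simp [T]; omega⟩)} := by
      ext ω
      simp only [Set.mem_inter_iff, Set.mem_preimage, Nat.lt_succ_iff_lt_or_eq,
        or_imp, forall_and, forall_eq]
      exact and_comm
    rw [hsplit, (hind.indepFun_finset S T hST hY).measure_inter_preimage_eq_mul _ _
      (Set.to_countable _).measurableSet (Set.to_countable _).measurableSet, pow_succ']
    exact mul_le_mul' (hq r) ih

end Probability

theorem exists_oriented_path_of_row_of_column {O : ℕ × ℕ → Prop} {n s : ℕ} (hn : 1 ≤ n)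
    (hs : 1 ≤ s) (hrow : ∀ i, 1 ≤ i → i ≤ n → O (i, 1)) (hcol : ∀ j, 1 ≤ j → j ≤ s → O (n, j)) :
    ∃ (ℓ : ℕ) (p : ℕ → ℕ × ℕ), p 0 = (1, 1) ∧ p ℓ = (n, s) ∧
      (∀ t, t < ℓ → p (t + 1) = p t + (1, 0) ∨ p (t + 1) = p t + (0, 1)) ∧
      (∀ t, t ≤ ℓ → O (p t)) := by
  refine ⟨n + s - 2, fun t => if t < n then (t + 1, 1) else (n, t + 2 - n), ?_, ?_, ?_, ?_⟩
  · simp only [if_pos (show 0 < n by omega)]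
  · dsimp only
    split_ifs <;> simp only [Prod.mk.injEq, true_and] <;> omega
  · intro t _
    dsimp only
    split_ifs <;> simp only [Prod.mk_add_mk, Prod.mk.injEq, true_or] <;> omega
  · intro t ht
    dsimp only
    split_ifs with htn
    · exact hrow _ (by omega) (by omega)
    · exact hcol _ (by omega) (by omega)

theorem exists_open_path_to_sInf {x y : ℕ → ℕ} {R : ℕ → Prop} {n L k : ℕ} (hn : 1 ≤ n)
    (hL : 1 ≤ L) (hLk : L ≤ k) (hk : R k)
    (havoid : ∀ j ∈ Icc 1 k, y j ∉ (Icc 1 n).image x) :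
    ∃ (ℓ : ℕ) (p : ℕ → ℕ × ℕ), p 0 = (1, 1) ∧ p ℓ = (n, sInf {t | L ≤ t ∧ R t}) ∧
      (∀ t, t < ℓ → p (t + 1) = p t + (1, 0) ∨ p (t + 1) = p t + (0, 1)) ∧
      (∀ t, t ≤ ℓ → x (p t).1 ≠ y (p t).2) := by
  have hmem : k ∈ {t | L ≤ t ∧ R t} := ⟨hLk, hk⟩
  have hσL : L ≤ sInf {t | L ≤ t ∧ R t} := (Nat.sInf_mem ⟨k, hmem⟩).1
  have hσk : sInf {t | L ≤ t ∧ R t} ≤ k := Nat.sInf_le hmem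
  have hopen : ∀ i, 1 ≤ i → i ≤ n → ∀ j, 1 ≤ j → j ≤ k → x i ≠ y j := fun i hi hin j hj hjt h =>
    havoid j (mem_Icc.2 ⟨hj, hjt⟩) (h ▸ mem_image_of_mem x (mem_Icc.2 ⟨hi, hin⟩))
  exact exists_oriented_path_of_row_of_column (O := fun q => x q.1 ≠ y q.2) hn (by omega)
    (fun i hi hin => hopen i hi hin 1 le_rfl (by omega))
    (fun j hj hjσ => hopen n hn le_rfl j hj (by omega))

theorem base_corner_to_corner_lower_bound_general (m : ℕ) :
    ∃ Lstar : ℕ, ∀ L₀ : ℕ, Lstar ≤ L₀ →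
    ∃ Mstar : ℕ, ∀ M : ℕ, 4 ∣ M → Mstar ≤ M →
    ∀ (Ω : Type) (_ : MeasurableSpace Ω) (μ : Measure Ω), IsProbabilityMeasure μ →
    ∀ (Y : ℕ → Ω → ℕ),
      (∀ j, Measurable (Y j)) →
      (∀ j ω, Y j ω ∈ Finset.Icc 1 M) →
      (∀ j k, k ∈ Finset.Icc 1 M → μ {ω | Y j ω = k} = (M : ℝ≥0∞)⁻¹) →
      iIndepFun Y μ →
      ∀ (n : ℕ) (x : ℕ → ℕ), 1 ≤ n → n ≤ (100 * m + 1) * L₀ ^ 10 →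
      (∀ i, 1 ≤ i → i ≤ n → x i ∈ Finset.Icc 1 M) →
      (3 : ℝ≥0∞) / 4 + ((2 : ℝ≥0∞) ^ (4 : ℕ))⁻¹ ≤
        μ {ω | ∃ (ℓ : ℕ) (p : ℕ → ℕ × ℕ), p 0 = (1, 1) ∧
            p ℓ = (n, sInf {t | L₀ ^ 10 ≤ t ∧ Y t ω % 4 = 3 ∧ Y (t + 1) ω % 4 = 2}) ∧
            (∀ t, t < ℓ → p (t + 1) = p t + (1, 0) ∨ p (t + 1) = p t + (0, 1)) ∧
            (∀ t, t ≤ ℓ → x (p t).1 ≠ Y (p t).2 ω)} := by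
  refine ⟨1, fun L₀ hL₀ => ⟨32 * ((L₀ ^ 10 + 128) * ((100 * m + 1) * L₀ ^ 10)), ?_⟩⟩
  intro M hM4 hMge Ω _ μ _ Y hYm hYrange hYunif hYindep n x hn hnN _
  have hL₁ : 1 ≤ L₀ ^ 10 := Nat.one_le_pow _ _ hL₀
  have hM : 0 < M := lt_of_lt_of_le (by positivity) hMge
  have hunif : ∀ j, IsUniformOnIcc (Y j) M μ := fun j => ⟨hYm j, hYrange j, hYunif j⟩
  have hno_pattern := measure_forall_lt_not_pair_le_pow hYm hYindep
    (fun a b => a % 4 = 3 ∧ b % 4 = 2) (L₀ ^ 10)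
    (fun i => ((hunif _).measure_not_mod_eq_and_mod_eq_le (hunif _) (hYindep.indepFun (by omega))
      hM4 hM (by norm_num) (by norm_num) (by norm_num) (by norm_num)).trans
        one_sub_inv_four_sq_le) 64
  have hhit : μ {ω | ∃ j ∈ Icc 1 (L₀ ^ 10 + 128), Y j ω ∈ (Icc 1 n).image x} ≤ 32⁻¹ := by
    refine (measure_exists_mem_le hunif _ _).trans
      (le_trans ?_ ((natCast_mul_inv_le_inv hMge).trans_eq (by norm_num)))
    gcongr
    exact_mod_cast Nat.mul_le_mul (by simp) (card_image_le.trans (by simpa using hnN))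
  refine le_measure_of_compl_subset (Set.compl_subset_comm.1 fun ω hω => ?_)
    ((measure_union_le _ _).trans (add_le_add hno_pattern hhit))
    three_div_four_add_inv_two_pow_four_add_le_one
  simp only [Set.mem_compl_iff, Set.mem_union, not_or, Set.mem_ofPred_eq, not_forall, not_not,
    not_exists, not_and, exists_prop] at hω
  obtain ⟨⟨i, hi, hpat⟩, havoid⟩ := hω
  exact exists_open_path_to_sInf (k := L₀ ^ 10 + 2 * i) hn hL₁ (by omega) hpat
    fun j hj => havoid j (mem_Icc.2 ⟨(mem_Icc.1 hj).1, by have := (mem_Icc.1 hj).2; omega⟩)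

/-- **Corner-to-corner connection against a typical word (base level).** With
`m = 60000`: for all sufficiently large `L₀`, with `L₁ = L₀^10`, there is `M*`
(depending on `L₀`) such that for every multiple `M ≥ M*` of `4` the following
holds. For any fixed word `x₁, …, x_n` in `{1, …, M}` with `1 ≤ n ≤ (100m+1)L₁`,
and `(Y_t)` i.i.d. uniform on `{1, …, M}` with
`σ = min {t ≥ L₁ : Y_t ≡ 3 [MOD 4], Y_{t+1} ≡ 2 [MOD 4]}`, the probability that
there is an open oriented path from `(1,1)` to `(n, σ)` — site `(i,j)` being open
iff `x i ≠ Y j` — is at least `3/4 + 2⁻⁴`. -/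
theorem base_corner_to_corner_lower_bound (m : ℕ) (hm : m = 60000) :
    ∃ Lstar : ℕ, ∀ L₀ : ℕ, Lstar ≤ L₀ →
    ∃ Mstar : ℕ, ∀ M : ℕ, 4 ∣ M → Mstar ≤ M →
    ∀ (Ω : Type) (_ : MeasurableSpace Ω) (μ : Measure Ω), IsProbabilityMeasure μ →
    ∀ (Y : ℕ → Ω → ℕ),
      (∀ j, Measurable (Y j)) →
      (∀ j ω, Y j ω ∈ Finset.Icc 1 M) →
      (∀ j k, k ∈ Finset.Icc 1 M → μ {ω | Y j ω = k} = (M : ℝ≥0∞)⁻¹) →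
      iIndepFun Y μ →
      ∀ (n : ℕ) (x : ℕ → ℕ), 1 ≤ n → n ≤ (100 * m + 1) * L₀ ^ 10 →
      (∀ i, 1 ≤ i → i ≤ n → x i ∈ Finset.Icc 1 M) →
      (3 : ℝ≥0∞) / 4 + ((2 : ℝ≥0∞) ^ (4 : ℕ))⁻¹ ≤
        μ {ω | ∃ (ℓ : ℕ) (p : ℕ → ℕ × ℕ), p 0 = (1, 1) ∧
            p ℓ = (n, sInf {t | L₀ ^ 10 ≤ t ∧ Y t ω % 4 = 3 ∧ Y (t + 1) ω % 4 = 2}) ∧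
            (∀ t, t < ℓ → p (t + 1) = p t + (1, 0) ∨ p (t + 1) = p t + (0, 1)) ∧
            (∀ t, t ≤ ℓ → x (p t).1 ≠ Y (p t).2 ω)} :=
  base_corner_to_corner_lower_bound_general m
end

section
/- Let j ≥ 1 be an integer, k₀ = 300000, R = 400000, r = 2·k₀·R³·10^{j+8} and N = R⁶·k₀⁵·10^{2j+20}. Let B and B′ be finite sets of integers with |B| ≤ k₀ and |B′| ≤ k₀, and let a : B → ℤ and b : B′ → ℤ be arbitrary functions. For h ∈ ℤ set P_h = {(x, a(x)+h−1) : x ∈ B} ∪ {(b(y)−h+1, y) : y ∈ B′} ⊆ ℤ². Then for every finite set T ⊆ ℤ with |T| = N and every set S ⊆ ℤ² with |S| = k₀, there exists h₀ ∈ T such that for every p ∈ P_{h₀} and every s ∈ S one has ‖p − s‖_∞ ≥ r. -/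
/-!
A shift `h` is bad for a pair `(x, s) ∈ B × S` only if the second coordinate `a x + h - 1` of the
assigned point lies within `r` of `s.2`, i.e. only if `h` lies within `r` of the centre
`s.2 - a x + 1`; symmetrically for `(y, s) ∈ B' × S` with the first coordinate. So at most
`2 k₀²` centres, each excluding fewer than `2r` integers, are to be avoided, and
`2 k₀² · 2r < N` leaves a good shift in `T`.
-/

open Finset

lemma card_biUnion_Ioo_sub_add_le (C : Finset ℤ) (r : ℕ) :
    #(C.biUnion fun c => Ioo (c - r) (c + r)) ≤ #C * (2 * r) :=
  card_biUnion_le_card_mul _ _ _ fun c _ => by rw [Int.card_Ioo]; omega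

lemma exists_mem_forall_le_abs_sub (T C : Finset ℤ) (r : ℕ) (hlt : #C * (2 * r) < #T) :
    ∃ t ∈ T, ∀ c ∈ C, (r : ℤ) ≤ |t - c| := by
  obtain ⟨t, htT, ht⟩ := exists_mem_notMem_of_card_lt_card
    ((card_biUnion_Ioo_sub_add_le C r).trans_lt hlt)
  refine ⟨t, htT, fun c hc => ?_⟩
  by_contra! hclose
  rw [abs_lt] at hclose
  exact ht (mem_biUnion.2 ⟨c, hc, mem_Ioo.2 ⟨by omega, by omega⟩⟩)

lemma card_image_product_union_le {α β γ : Type*} [DecidableEq γ] (B B' : Finset α)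
    (S : Finset β) (f g : α × β → γ) :
    #((B ×ˢ S).image f ∪ (B' ×ˢ S).image g) ≤ (#B + #B') * #S :=
  calc _ ≤ #((B ×ˢ S).image f) + #((B' ×ˢ S).image g) := card_union_le _ _
    _ ≤ #(B ×ˢ S) + #(B' ×ˢ S) := add_le_add card_image_le card_image_le
    _ = (#B + #B') * #S := by rw [card_product, card_product, add_mul]

lemma centres_mul_width_lt {k₀ R : ℕ} (hk₀ : 0 < k₀) (hR : 0 < R) (j : ℕ) :
    (k₀ + k₀) * k₀ * (2 * (2 * k₀ * R ^ 3 * 10 ^ (j + 8))) <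
      R ^ 6 * k₀ ^ 5 * 10 ^ (2 * j + 20) := by
  have hbase : 0 < k₀ ^ 3 * R ^ 3 * 10 ^ (j + 8) := by positivity
  have hfactor : 8 < k₀ ^ 2 * R ^ 3 * 10 ^ (j + 12) :=
    calc 8 < 10 ^ 12 := by norm_num
      _ ≤ 10 ^ (j + 12) := Nat.pow_le_pow_right (by norm_num) (by omega)
      _ ≤ k₀ ^ 2 * R ^ 3 * 10 ^ (j + 12) :=
        Nat.le_mul_of_pos_left _ (by positivity)
  calc _ = k₀ ^ 3 * R ^ 3 * 10 ^ (j + 8) * 8 := by ring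
    _ < k₀ ^ 3 * R ^ 3 * 10 ^ (j + 8) * (k₀ ^ 2 * R ^ 3 * 10 ^ (j + 12)) :=
      Nat.mul_lt_mul_of_pos_left hfactor hbase
    _ = _ := by ring

theorem admissible_assignment_avoiding_forbidden_set_general
    (j k₀ R : ℕ) (hk₀ : k₀ = 300000) (hR : R = 400000)
    (B B' : Finset ℤ) (hB : B.card ≤ k₀) (hB' : B'.card ≤ k₀)
    (a b : ℤ → ℤ)
    (T : Finset ℤ) (hT : T.card = R ^ 6 * k₀ ^ 5 * 10 ^ (2 * j + 20))
    (S : Finset (ℤ × ℤ)) (hS : S.card = k₀) :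
    ∃ h₀ ∈ T, ∀ p : ℤ × ℤ,
      p ∈ ((fun x => (x, a x + h₀ - 1)) '' (B : Set ℤ) ∪
           (fun y => (b y - h₀ + 1, y)) '' (B' : Set ℤ)) →
      ∀ s ∈ S, ((2 * k₀ * R ^ 3 * 10 ^ (j + 8) : ℕ) : ℤ) ≤ max |p.1 - s.1| |p.2 - s.2| := by
  have hcentres : #((B ×ˢ S).image (fun q => q.2.2 - a q.1 + 1) ∪
      (B' ×ˢ S).image (fun q => b q.1 + 1 - q.2.1)) ≤ (k₀ + k₀) * k₀ := by
    refine (card_image_product_union_le B B' S _ _).trans ?_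
    rw [hS]
    exact Nat.mul_le_mul_right _ (add_le_add hB hB')
  have hwidth := centres_mul_width_lt (k₀ := k₀) (R := R) (by omega) (by omega) j
  rw [← hT] at hwidth
  obtain ⟨h₀, hh₀T, hfar⟩ :=
    exists_mem_forall_le_abs_sub T _ _ ((Nat.mul_le_mul_right _ hcentres).trans_lt hwidth)
  refine ⟨h₀, hh₀T, ?_⟩
  rintro p (⟨x, hx, rfl⟩ | ⟨y, hy, rfl⟩) s hs
  · have := hfar _ (mem_union_left _ (mem_image_of_mem _ (mk_mem_product hx hs)))
    exact le_max_of_le_right (this.trans_eq (by congr 1; ring))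
  · have := hfar _ (mem_union_right _ (mem_image_of_mem _ (mk_mem_product hy hs)))
    exact le_max_of_le_left (this.trans_eq (by rw [← abs_neg]; congr 1; ring))

/-- **Existence of an admissible assignment avoiding a forbidden set.** With
`k₀ = 300000`, `R = 400000`, `r = 2 k₀ R³ 10^(j+8)` and `N = R⁶ k₀⁵ 10^(2j+20)`:
given `B, B'` of size at most `k₀`, functions `a : B → ℤ`, `b : B' → ℤ` encoding the
family of shifted assignments `τ_h(x) = a(x) + h - 1`, `τ_h⁻¹(y) = b(y) - h + 1`,
any set `T` of `N` candidate shifts, and any forbidden set `S` of `k₀` sites, some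
shift `h₀ ∈ T` keeps all assigned points at `‖·‖_∞`-distance at least `r` from `S`. -/
theorem admissible_assignment_avoiding_forbidden_set
    (j k₀ R : ℕ) (hj : 1 ≤ j) (hk₀ : k₀ = 300000) (hR : R = 400000)
    (B B' : Finset ℤ) (hB : B.card ≤ k₀) (hB' : B'.card ≤ k₀)
    (a b : ℤ → ℤ)
    (T : Finset ℤ) (hT : T.card = R ^ 6 * k₀ ^ 5 * 10 ^ (2 * j + 20))
    (S : Finset (ℤ × ℤ)) (hS : S.card = k₀) :
    ∃ h₀ ∈ T, ∀ p : ℤ × ℤ,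
      p ∈ ((fun x => (x, a x + h₀ - 1)) '' (B : Set ℤ) ∪
           (fun y => (b y - h₀ + 1, y)) '' (B' : Set ℤ)) →
      ∀ s ∈ S, ((2 * k₀ * R ^ 3 * 10 ^ (j + 8) : ℕ) : ℤ) ≤ max |p.1 - s.1| |p.2 - s.2| :=
  admissible_assignment_avoiding_forbidden_set_general j k₀ R hk₀ hR B B' hB hB' a b T hT S hS
end

section
/- Let M be a positive multiple of 4 and L₁ ≥ 1 an integer. Let (Y_t)_{t≥1} be i.i.d. uniform on {1,…,M} and σ = min{t ≥ L₁ : Y_t ≡ 3 (mod 4) and Y_{t+1} ≡ 2 (mod 4)}. Then for every integer k ≥ 0, P( σ = L₁ + k and Y_i ≢ 2 (mod 4) for all i with L₁ < i ≤ L₁ + k ) ≥ (1/4)² · (3/4)^{k}. -/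
/-!
The event is forced by prescribing residues on the window `L₁, …, L₁ + k + 1`: no residue `2`
at `L₁, …, L₁ + k - 1`, residue `3` at `L₁ + k` and residue `2` at `L₁ + k + 1`. Then the first
`(3, 2)`-pattern starting at or after `L₁` starts exactly at `L₁ + k`, since an earlier one would
put a `2` inside the window. As `4 ∣ M`, every residue class mod `4` has probability `1/4`, so by
independence the prescribed event has probability exactly `(1/4)² (3/4)^k`.
-/

open MeasureTheory ProbabilityTheory Finset
open scoped ENNReal

namespace Nat

theorem card_filter_Icc_mod_eq {q r : ℕ} (hr : 0 < r) (hrq : r < q) (n : ℕ) :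
    #{m ∈ Icc 1 (q * n) | m % q = r} = n := by
  have himage : {m ∈ Icc 1 (q * n) | m % q = r} = (range n).image (fun i => q * i + r) := by
    ext m
    simp only [mem_filter, mem_Icc, mem_image, mem_range]
    constructor
    · rintro ⟨⟨-, hm⟩, rfl⟩
      refine ⟨m / q, (Nat.div_lt_iff_lt_mul (by omega)).2 ?_, Nat.div_add_mod m q⟩
      rw [mul_comm]
      refine hm.lt_of_ne ?_
      rintro rfl
      simp at hr
    · rintro ⟨i, hi, rfl⟩
      exact ⟨⟨by omega, by nlinarith⟩, by simp [Nat.mod_eq_of_lt hrq]⟩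
  rw [himage, Finset.card_image_of_injective _ (fun a b h => by
    simpa [Nat.mul_left_cancel_iff (by omega : 0 < q)] using h), card_range]

theorem card_filter_Icc_mod_ne {q r : ℕ} (hr : 0 < r) (hrq : r < q) (n : ℕ) :
    #{m ∈ Icc 1 (q * n) | m % q ≠ r} = (q - 1) * n := by
  have h := card_filter_add_card_filter_not (s := Icc 1 (q * n)) (fun m => m % q = r)
  rw [card_filter_Icc_mod_eq hr hrq, Nat.card_Icc, Nat.add_sub_cancel] at h
  rw [Nat.sub_mul, one_mul]
  exact Nat.eq_sub_of_add_eq' h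

end Nat

section UniformResidues

variable {Ω : Type*} [MeasurableSpace Ω] {μ : Measure Ω} {X : Ω → ℕ}

theorem measure_setOf_eq_card_filter_mul (hX : Measurable X) {s : Finset ℕ} {c : ℝ≥0∞}
    (hrange : ∀ ω, X ω ∈ s) (hunif : ∀ k ∈ s, μ (X ⁻¹' {k}) = c)
    (p : ℕ → Prop) [DecidablePred p] :
    μ {ω | p (X ω)} = #{m ∈ s | p m} * c := by
  have hunion : {ω | p (X ω)} = ⋃ m ∈ {m ∈ s | p m}, X ⁻¹' {m} := by
    ext ω
    simp [hrange ω]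
  rw [hunion, measure_biUnion_finset
    (fun a _ b _ hab => Set.disjoint_left.2 fun ω ha hb => hab (ha.symm.trans hb))
    (fun m _ => hX (measurableSet_singleton m)),
    sum_eq_card_nsmul fun m hm => hunif m (mem_filter.1 hm).1, nsmul_eq_mul]

variable {M q r : ℕ} (hX : Measurable X) (hqM : q ∣ M) (hM : 0 < M) (hr : 0 < r) (hrq : r < q)
  (hrange : ∀ ω, X ω ∈ Icc 1 M) (hunif : ∀ k ∈ Icc 1 M, μ {ω | X ω = k} = (M : ℝ≥0∞)⁻¹)
include hX hqM hM hr hrq hrange hunif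

theorem measure_mod_eq_of_uniform_Icc : μ {ω | X ω % q = r} = (q : ℝ≥0∞)⁻¹ := by
  obtain ⟨n, rfl⟩ := hqM
  have hn : (n : ℝ≥0∞) ≠ 0 := Nat.cast_ne_zero.2 (by rintro rfl; simp at hM)
  rw [measure_setOf_eq_card_filter_mul hX hrange hunif (· % q = r),
    Nat.card_filter_Icc_mod_eq hr hrq, ← div_eq_mul_inv, Nat.cast_mul]
  nth_rw 1 [← one_mul (n : ℝ≥0∞)]
  rw [ENNReal.mul_div_mul_right _ _ hn (ENNReal.natCast_ne_top n), one_div]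

theorem measure_mod_ne_of_uniform_Icc :
    μ {ω | X ω % q ≠ r} = ((q - 1 : ℕ) : ℝ≥0∞) / q := by
  obtain ⟨n, rfl⟩ := hqM
  have hn : (n : ℝ≥0∞) ≠ 0 := Nat.cast_ne_zero.2 (by rintro rfl; simp at hM)
  rw [measure_setOf_eq_card_filter_mul hX hrange hunif (· % q ≠ r),
    Nat.card_filter_Icc_mod_ne hr hrq, ← div_eq_mul_inv, Nat.cast_mul, Nat.cast_mul,
    ENNReal.mul_div_mul_right _ _ hn (ENNReal.natCast_ne_top n)]

end UniformResidues

def blockPattern (k j : ℕ) : Set ℕ :=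
  if j = k then {m | m % 4 = 3} else if j = k + 1 then {m | m % 4 = 2} else {m | m % 4 ≠ 2}

theorem sInf_eq_of_blockPattern {y : ℕ → ℕ} {L k : ℕ}
    (hy : ∀ j < k + 2, y (L + j) ∈ blockPattern k j) :
    sInf {t | L ≤ t ∧ y t % 4 = 3 ∧ y (t + 1) % 4 = 2} = L + k ∧
      ∀ i, L < i → i ≤ L + k → y i % 4 ≠ 2 := by
  have h3 : y (L + k) % 4 = 3 := by simpa [blockPattern] using hy k (by omega)
  have h2 : y (L + (k + 1)) % 4 = 2 := by simpa [blockPattern] using hy (k + 1) (by omega)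
  have hwindow : ∀ i, L ≤ i → i ≤ L + k → y i % 4 ≠ 2 := by
    intro i hLi hik
    obtain ⟨j, rfl⟩ := Nat.exists_eq_add_of_le hLi
    rcases hik.lt_or_eq with hjk | hjk
    · simpa [blockPattern, show j ≠ k by omega, show j ≠ k + 1 by omega] using hy j (by omega)
    · obtain rfl : j = k := by omega
      omega
  refine ⟨IsLeast.csInf_eq ⟨⟨by omega, h3, h2⟩, ?_⟩, fun i hLi => hwindow i hLi.le⟩
  rintro t ⟨hLt, -, ht2⟩
  by_contra! htk
  exact hwindow (t + 1) (by omega) (by omega) ht2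

theorem measure_biInter_blockPattern {Ω : Type*} [MeasurableSpace Ω] {μ : Measure Ω}
    {Y : ℕ → Ω → ℕ} (hindep : iIndepFun Y μ)
    (h3 : ∀ i, μ (Y i ⁻¹' {m | m % 4 = 3}) = 4⁻¹)
    (h2 : ∀ i, μ (Y i ⁻¹' {m | m % 4 = 2}) = 4⁻¹)
    (hne2 : ∀ i, μ (Y i ⁻¹' {m | m % 4 ≠ 2}) = 3 / 4) (L k : ℕ) :
    μ (⋂ j ∈ range (k + 2), Y (L + j) ⁻¹' blockPattern k j) = 4⁻¹ ^ 2 * (3 / 4) ^ k := by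
  have hprefix : ∀ j ∈ range k, μ (Y (L + j) ⁻¹' blockPattern k j) = 3 / 4 := fun j hj => by
    have hjk := mem_range.1 hj
    simpa [blockPattern, hjk.ne, show j ≠ k + 1 by omega] using hne2 (L + j)
  rw [(hindep.precomp (add_right_injective L)).measure_inter_preimage_eq_mul _
      fun _ _ => MeasurableSet.of_discrete,
    prod_range_succ, prod_range_succ, prod_congr rfl hprefix, prod_const, card_range]
  simp only [blockPattern, if_pos, if_neg (Nat.succ_ne_self k)]
  rw [h3, h2]
  ring

theorem level_one_block_prescribed_length_general (M L₁ : ℕ) (hM4 : 4 ∣ M) (hM : 0 < M)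
    (Ω : Type) [MeasurableSpace Ω] (μ : Measure Ω) [IsProbabilityMeasure μ]
    (Y : ℕ → Ω → ℕ)
    (hmeas : ∀ j, Measurable (Y j))
    (hrange : ∀ j ω, Y j ω ∈ Finset.Icc 1 M)
    (hunif : ∀ j k, k ∈ Finset.Icc 1 M → μ {ω | Y j ω = k} = (M : ℝ≥0∞)⁻¹)
    (hindep : iIndepFun Y μ) :
    ∀ k : ℕ,
      ((4 : ℝ≥0∞)⁻¹) ^ (2 : ℕ) * ((3 : ℝ≥0∞) / 4) ^ k ≤
        μ {ω | sInf {t | L₁ ≤ t ∧ Y t ω % 4 = 3 ∧ Y (t + 1) ω % 4 = 2} = L₁ + k ∧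
            ∀ i, L₁ < i → i ≤ L₁ + k → Y i ω % 4 ≠ 2} := by
  intro k
  have h3 (i : ℕ) : μ (Y i ⁻¹' {m | m % 4 = 3}) = 4⁻¹ := by
    simpa using measure_mod_eq_of_uniform_Icc (hmeas i) hM4 hM (by norm_num) (by norm_num)
      (hrange i) (hunif i)
  have h2 (i : ℕ) : μ (Y i ⁻¹' {m | m % 4 = 2}) = 4⁻¹ := by
    simpa using measure_mod_eq_of_uniform_Icc (hmeas i) hM4 hM (by norm_num) (by norm_num)
      (hrange i) (hunif i)
  have hne2 (i : ℕ) : μ (Y i ⁻¹' {m | m % 4 ≠ 2}) = 3 / 4 := by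
    simpa using measure_mod_ne_of_uniform_Icc (hmeas i) hM4 hM (by norm_num) (by norm_num)
      (hrange i) (hunif i)
  rw [← measure_biInter_blockPattern hindep h3 h2 hne2 L₁ k]
  refine measure_mono fun ω hω => sInf_eq_of_blockPattern (y := fun t => Y t ω) fun j hj => ?_
  exact Set.mem_iInter₂.1 hω j (mem_range.2 hj)

/-- **Prescribing the excess length of a level-1 Y-block.** For `M` a positive
multiple of `4`, `L₁ ≥ 1`, and `(Y_t)` i.i.d. uniform on `{1, …, M}` with
`σ = min {t ≥ L₁ : Y_t ≡ 3 [MOD 4], Y_{t+1} ≡ 2 [MOD 4]}`, for every `k ≥ 0`,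
`P(σ = L₁ + k and Y_i ≢ 2 [MOD 4] for all L₁ < i ≤ L₁ + k) ≥ (1/4)² (3/4)^k`. -/
theorem level_one_block_prescribed_length (M L₁ : ℕ) (hM4 : 4 ∣ M) (hM : 0 < M)
    (hL₁ : 1 ≤ L₁)
    (Ω : Type) [MeasurableSpace Ω] (μ : Measure Ω) [IsProbabilityMeasure μ]
    (Y : ℕ → Ω → ℕ)
    (hmeas : ∀ j, Measurable (Y j))
    (hrange : ∀ j ω, Y j ω ∈ Finset.Icc 1 M)
    (hunif : ∀ j k, k ∈ Finset.Icc 1 M → μ {ω | Y j ω = k} = (M : ℝ≥0∞)⁻¹)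
    (hindep : iIndepFun Y μ) :
    ∀ k : ℕ,
      ((4 : ℝ≥0∞)⁻¹) ^ (2 : ℕ) * ((3 : ℝ≥0∞) / 4) ^ k ≤
        μ {ω | sInf {t | L₁ ≤ t ∧ Y t ω % 4 = 3 ∧ Y (t + 1) ω % 4 = 2} = L₁ + k ∧
            ∀ i, L₁ < i → i ≤ L₁ + k → Y i ω % 4 ≠ 2} :=
  level_one_block_prescribed_length_general M L₁ hM4 hM Ω μ Y hmeas hrange hunif hindep
end
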